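/- arXiv:2405.04586 — 4 statements merged into one kernel-verified Lean document; each statement's English description precedes it below -/
import Mathlib

section
/- Let K = {0,1,...,r-1} with r = q^ℓ + 1 for a prime power q, let w ⊂ F_q^{n+ℓ} be a fixed ℓ-dimensional subspace, φ: K∖{0} → w a bijection, and f_1,...,f_n linearly independent vectors in F_q^{n+ℓ} whose span intersects w trivially. Define, for each word x̂ of weight m in K^n, φ̃(x̂) = span{ f_i + φ(x̂_i) : x̂_i ≠ 0 }. Then the map φ̃ is injective from words of weight m in K^n into m-dimensional subspaces of F_q^{n+ℓ} intersecting w trivially. -/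
/-!
Write `φ̃(x) = span {f i + φ(x i) : x i ≠ 0}`. If `f i + v` with `v ∈ w` lies in `φ̃(y)`, write
it as a combination `∑ c j (f j + φ(y j))`; then `f i - ∑ c j f j` lies both in `span f` and in
`w`, so it vanishes, and linear independence of the `f j` forces `c = single i 1`. Hence
`y i ≠ 0` and `φ(y i) = v`: the subspace `φ̃(y)` determines the nonzero letters of `y` together
with their positions, and `φ̃` is injective on all words, of any weight.
-/

open Submodule Finsupp

section

variable {R M ι : Type*} [Ring R] [AddCommGroup M] [Module R M]
  {f u : ι → M} {W : Submodule R M}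

theorem LinearIndependent.mem_and_eq_of_add_mem_span_image_add [Nontrivial R]
    (hf : LinearIndependent R f) (hfW : span R (Set.range f) ⊓ W = ⊥) {s : Set ι}
    (hu : ∀ j ∈ s, u j ∈ W) {i : ι} {v : M} (hv : v ∈ W)
    (h : f i + v ∈ span R ((f + u) '' s)) : i ∈ s ∧ u i = v := by
  obtain ⟨l, hl, hlv⟩ := (mem_span_image_iff_linearCombination R).1 h
  have hsplit : linearCombination R (f + u) l =
      linearCombination R f l + linearCombination R u l := by
    simp [linearCombination_apply, smul_add, Finsupp.sum_add]
  have huW : linearCombination R u l ∈ W :=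
    span_le.2 (Set.image_subset_iff.2 hu) <|
      (mem_span_image_iff_linearCombination R).2 ⟨l, hl, rfl⟩
  have hfl : linearCombination R f l = f i := by
    rw [← sub_eq_zero, ← mem_bot R, ← hfW]
    refine ⟨sub_mem (range_linearCombination R (v := f) ▸ LinearMap.mem_range_self _ l)
      (subset_span ⟨i, rfl⟩), ?_⟩
    rw [show linearCombination R f l - f i = v - linearCombination R u l by
      rw [hsplit] at hlv; rw [sub_eq_sub_iff_add_eq_add, hlv, add_comm]]
    exact sub_mem hv huW
  obtain rfl : l = single i 1 := hf (by rwa [linearCombination_single, one_smul])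
  exact ⟨by simpa using (mem_supported R _).1 hl, by simpa [hsplit] using hlv⟩

variable {K : Type*} [Zero K]

def wordSpan (f : ι → M) (φ : {k : K // k ≠ 0} → W) (x : ι → K) : Submodule R M :=
  span R {v : M | ∃ i : ι, ∃ h : x i ≠ 0, v = f i + (φ ⟨x i, h⟩ : M)}

variable {φ : {k : K // k ≠ 0} → W}

theorem wordSpan_eq_span_image [DecidablePred fun k : K => k ≠ 0] (x : ι → K) :
    wordSpan f φ x =
      span R ((f + fun i => if h : x i ≠ 0 then (φ ⟨x i, h⟩ : M) else 0) '' {i | x i ≠ 0}) := by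
  unfold wordSpan
  congr 1
  ext v
  constructor
  · rintro ⟨i, hi, rfl⟩
    exact ⟨i, hi, by simp only [Pi.add_apply, dif_pos hi]⟩
  · rintro ⟨i, hi, rfl⟩
    exact ⟨i, hi, by simp only [Pi.add_apply, dif_pos (show x i ≠ 0 from hi)]⟩

theorem eq_of_wordSpan_le [Nontrivial R] (hf : LinearIndependent R f)
    (hfW : span R (Set.range f) ⊓ W = ⊥) (hφ : Function.Injective φ) {x y : ι → K}
    (hxy : wordSpan f φ x ≤ wordSpan f φ y) {i : ι} (hi : x i ≠ 0) : y i = x i := by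
  classical
  have hmem : f i + (φ ⟨x i, hi⟩ : M) ∈ wordSpan f φ y := hxy (subset_span ⟨i, hi, rfl⟩)
  rw [wordSpan_eq_span_image] at hmem
  obtain ⟨hyi, heq⟩ := hf.mem_and_eq_of_add_mem_span_image_add hfW
    (fun j hj => by simp [show y j ≠ 0 from hj]) (φ _).2 hmem
  rw [dif_pos (show y i ≠ 0 from hyi)] at heq
  exact congrArg Subtype.val (hφ (Subtype.coe_injective heq))

theorem wordSpan_injective [Nontrivial R] (hf : LinearIndependent R f)
    (hfW : span R (Set.range f) ⊓ W = ⊥) (hφ : Function.Injective φ) :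
    Function.Injective (wordSpan (K := K) f φ) := by
  intro x y hxy
  funext i
  by_cases hx : x i = 0
  · by_cases hy : y i = 0
    · rw [hx, hy]
    · exact absurd ((eq_of_wordSpan_le hf hfW hφ hxy.ge hy).symm.trans hx) hy
  · exact (eq_of_wordSpan_le hf hfW hφ hxy.le hx).symm

end

theorem stmt3_general (n ℓ m q : ℕ)
    (F : Type) [Field F]
    (w : Submodule F (Fin (n + ℓ) → F))
    (φ : {k : Fin (q ^ ℓ + 1) // k ≠ 0} → w) (hφ : Function.Bijective φ)
    (f : Fin n → (Fin (n + ℓ) → F)) (hf : LinearIndependent F f)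
    (hfw : Submodule.span F (Set.range f) ⊓ w = ⊥) :
    Set.InjOn
      (fun x : Fin n → Fin (q ^ ℓ + 1) =>
        Submodule.span F
          {v : Fin (n + ℓ) → F |
            ∃ i : Fin n, ∃ h : x i ≠ 0, v = f i + (φ ⟨x i, h⟩ : Fin (n + ℓ) → F)})
      {x : Fin n → Fin (q ^ ℓ + 1) |
        (Finset.univ.filter (fun i => x i ≠ 0)).card = m} :=
  (wordSpan_injective hf hfw hφ.injective).injOn

/-- The embedding `φ̃` of weight-`m` words over the alphabet `K = Fin (q^ℓ+1)` into
`m`-dimensional subspaces of `F_q^{n+ℓ}` intersecting `w` trivially is injective. -/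
theorem stmt3 (pr e n ℓ m q : ℕ) (hpr : pr.Prime) (he : 0 < e) (hq : q = pr ^ e)
    (F : Type) [Field F] [Fintype F] (hF : Fintype.card F = q)
    (w : Submodule F (Fin (n + ℓ) → F)) (hw : Module.finrank F w = ℓ)
    (φ : {k : Fin (q ^ ℓ + 1) // k ≠ 0} → w) (hφ : Function.Bijective φ)
    (f : Fin n → (Fin (n + ℓ) → F)) (hf : LinearIndependent F f)
    (hfw : Submodule.span F (Set.range f) ⊓ w = ⊥) :
    Set.InjOn
      (fun x : Fin n → Fin (q ^ ℓ + 1) =>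
        Submodule.span F
          {v : Fin (n + ℓ) → F |
            ∃ i : Fin n, ∃ h : x i ≠ 0, v = f i + (φ ⟨x i, h⟩ : Fin (n + ℓ) → F)})
      {x : Fin n → Fin (q ^ ℓ + 1) |
        (Finset.univ.filter (fun i => x i ≠ 0)).card = m} :=
  stmt3_general n ℓ m q F w φ hφ f hf hfw
end

section
/- The polynomials K_j(N,ℓ;q;s) satisfy the backward contiguity relation K_j(N,ℓ;q;s) = (q^ℓ - q^{j-1}) K_{j-1}(N-1,ℓ;q;s) + q^j K_j(N-1,ℓ;q;s), valid for 0 ≤ j ≤ min(N,ℓ) and 0 ≤ s ≤ min(N-1,ℓ). -/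
/-!
Write `K_j(N,ℓ;q;s) = c_j ∑_{k ≤ j} C(N,j,k) w_k` with `c_j = (q^{-ℓ};q)_j q^{ℓj}`,
`C(N,j,k) = [N,j]_q (q^{-j};q)_k / (q^{-N};q)_k` and a weight `w_k` independent of `N` and `j`.
Since `c_j = (q^ℓ - q^{j-1}) c_{j-1}`, the relation reduces to one for the coefficients `C`.
These have the closed form `C(N,j,k) = q^{k(N-j)} [N-k,j-k]_q` for `k ≤ j ≤ N`, which turns
the coefficient relation into the q-Pascal rule `[M+1,i+1]_q = [M,i]_q + q^{i+1} [M,i+1]_q`.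
For `j = N` the term `K_j(N-1,ℓ;q;s)` vanishes, and so does the top summand `w_N`, since `s < N`.
-/

noncomputable section

/-- q-Pochhammer symbol `(a;q)_k = ∏_{i=0}^{k-1} (1 - a q^i)`. -/
def qPoch (q a : ℝ) (k : ℕ) : ℝ := ∏ i ∈ Finset.range k, (1 - a * q ^ i)

/-- Gaussian (q-binomial) coefficient `[n choose m]_q`. -/
def gbinom (q : ℝ) (n m : ℕ) : ℝ := qPoch q q n / (qPoch q q m * qPoch q q (n - m))

/-- Terminating basic hypergeometric series `₃φ₂(a₁,a₂,a₃;b₁,b₂ | q, z)`,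
summed up to degree `deg`. -/
def phi32 (q a1 a2 a3 b1 b2 z : ℝ) (deg : ℕ) : ℝ :=
  ∑ k ∈ Finset.range (deg + 1),
    (qPoch q a1 k * qPoch q a2 k * qPoch q a3 k) /
      (qPoch q b1 k * qPoch q b2 k * qPoch q q k) * z ^ k

/-- Normalized affine q-Krawtchouk polynomial `K_j(N,ℓ;q;s)`, with the convention
that it vanishes when `j` is outside `[0, min(N,ℓ)]`. -/
def Kpoly (q : ℝ) (N ℓ : ℕ) (j s : ℤ) : ℝ :=
  if 0 ≤ j ∧ j ≤ min (N : ℤ) (ℓ : ℤ) then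
    qPoch q (q ^ (-(ℓ : ℤ))) j.toNat * gbinom q N j.toNat * q ^ ((ℓ : ℤ) * j) *
      phi32 q (q ^ (-j)) 0 (q ^ (-s)) (q ^ (-(ℓ : ℤ))) (q ^ (-(N : ℤ))) q j.toNat
  else 0

/-- Normalized dual q-Hahn polynomial `E_i(N,m;q;r)`, with the convention
that it vanishes when `i` is outside `[0, min(N-m,m)]`. -/
def Epoly (q : ℝ) (N m : ℕ) (i r : ℤ) : ℝ :=
  if 0 ≤ i ∧ i ≤ min ((N : ℤ) - (m : ℤ)) (m : ℤ) then
    q ^ (i * i) * gbinom q m i.toNat * gbinom q (N - m) i.toNat *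
      phi32 q (q ^ (-i)) (q ^ (-r)) (q ^ (r - (N : ℤ) - 1)) (q ^ (-(m : ℤ)))
        (q ^ ((m : ℤ) - (N : ℤ))) q i.toNat
  else 0

variable {q : ℝ}

theorem qPoch_zero (q a : ℝ) : qPoch q a 0 = 1 := by simp [qPoch]

theorem qPoch_succ (q a : ℝ) (k : ℕ) : qPoch q a (k + 1) = qPoch q a k * (1 - a * q ^ k) :=
  Finset.prod_range_succ _ _

theorem qPoch_succ' (q a : ℝ) (k : ℕ) : qPoch q a (k + 1) = (1 - a) * qPoch q (a * q) k := by
  rw [qPoch, Finset.prod_range_succ', qPoch, mul_comm]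
  simp only [pow_zero, mul_one, pow_succ', mul_assoc]

theorem one_sub_mul_pow_ne_zero (hq : 1 < q) (n : ℕ) : 1 - q * q ^ n ≠ 0 := by
  rw [← pow_succ']
  exact sub_ne_zero.2 (one_lt_pow₀ hq n.succ_ne_zero).ne

theorem qPoch_self_ne_zero (hq : 1 < q) (k : ℕ) : qPoch q q k ≠ 0 :=
  Finset.prod_ne_zero_iff.2 fun i _ => one_sub_mul_pow_ne_zero hq i

theorem qPoch_zpow_neg_ne_zero (hq : 1 < q) {m k : ℕ} (h : k ≤ m) :
    qPoch q (q ^ (-(m : ℤ))) k ≠ 0 := by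
  refine Finset.prod_ne_zero_iff.2 fun i hi => sub_ne_zero.2 (ne_of_gt ?_)
  rw [zpow_neg, zpow_natCast, inv_mul_lt_one₀ (by positivity)]
  exact pow_lt_pow_right₀ hq ((Finset.mem_range.1 hi).trans_le h)

theorem qPoch_zpow_neg_eq_zero (hq : q ≠ 0) {m k : ℕ} (h : m < k) :
    qPoch q (q ^ (-(m : ℤ))) k = 0 := by
  refine Finset.prod_eq_zero (Finset.mem_range.2 h) ?_
  rw [zpow_neg, zpow_natCast, inv_mul_cancel₀ (pow_ne_zero m hq), sub_self]

theorem qPoch_zpow_neg_succ (hq : q ≠ 0) (m k : ℕ) :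
    qPoch q (q ^ (-((m + 1 : ℕ) : ℤ))) (k + 1)
      = (1 - (q ^ (m + 1))⁻¹) * qPoch q (q ^ (-(m : ℤ))) k := by
  rw [qPoch_succ', zpow_neg, zpow_natCast, zpow_neg, zpow_natCast, pow_succ,
    mul_inv, inv_mul_cancel_right₀ hq]

theorem gbinom_zero_right (hq : 1 < q) (n : ℕ) : gbinom q n 0 = 1 := by
  rw [gbinom, Nat.sub_zero, qPoch_zero, one_mul, div_self (qPoch_self_ne_zero hq n)]

theorem gbinom_self (hq : 1 < q) (n : ℕ) : gbinom q n n = 1 := by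
  rw [gbinom, Nat.sub_self, qPoch_zero, mul_one, div_self (qPoch_self_ne_zero hq n)]

theorem gbinom_succ_succ_mul (hq : 1 < q) (n r : ℕ) :
    gbinom q (n + 1) (r + 1) * (1 - q ^ (r + 1)) = (1 - q ^ (n + 1)) * gbinom q n r := by
  have := one_sub_mul_pow_ne_zero hq r
  have := qPoch_self_ne_zero hq r
  have := qPoch_self_ne_zero hq (n - r)
  rw [gbinom, gbinom, Nat.add_sub_add_right, qPoch_succ q q n, qPoch_succ q q r, pow_succ',
    pow_succ']
  field_simp

theorem gbinom_succ_succ (hq : 1 < q) {n r : ℕ} (h : r < n) :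
    gbinom q (n + 1) (r + 1) = gbinom q n r + q ^ (r + 1) * gbinom q n (r + 1) := by
  obtain ⟨d, rfl⟩ := Nat.exists_eq_add_of_lt h
  have := qPoch_self_ne_zero hq r
  have := qPoch_self_ne_zero hq d
  have := one_sub_mul_pow_ne_zero hq r
  have := one_sub_mul_pow_ne_zero hq d
  rw [gbinom, gbinom, gbinom, show r + d + 1 + 1 - (r + 1) = d + 1 by omega,
    show r + d + 1 - r = d + 1 by omega, show r + d + 1 - (r + 1) = d by omega,
    qPoch_succ q q (r + d + 1), qPoch_succ q q r, qPoch_succ q q d]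
  field_simp
  ring

theorem gbinom_succ_succ_mul_one_sub_inv (hq : 1 < q) (r m : ℕ) :
    gbinom q (r + m + 1) (r + 1) * (1 - (q ^ (r + 1))⁻¹)
      = q ^ m * (1 - (q ^ (r + m + 1))⁻¹) * gbinom q (r + m) r := by
  have h := gbinom_succ_succ_mul hq (r + m) r
  have hpow : q ^ (r + m + 1) = q ^ (r + 1) * q ^ m := by ring
  rw [hpow] at h ⊢
  have : q ≠ 0 := by positivity
  field_simp
  linear_combination (-1 : ℝ) * h

def Kscale (q : ℝ) (ℓ j : ℕ) : ℝ := qPoch q (q ^ (-(ℓ : ℤ))) j * q ^ ((ℓ : ℤ) * j)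

def Kcoeff (q : ℝ) (N j k : ℕ) : ℝ :=
  gbinom q N j * qPoch q (q ^ (-(j : ℤ))) k / qPoch q (q ^ (-(N : ℤ))) k

def Kweight (q : ℝ) (ℓ : ℕ) (s : ℤ) (k : ℕ) : ℝ :=
  qPoch q (q ^ (-s)) k / (qPoch q (q ^ (-(ℓ : ℤ))) k * qPoch q q k) * q ^ k

theorem Kpoly_eq_sum {N ℓ j : ℕ} (hjN : j ≤ N) (hjℓ : j ≤ ℓ) (s : ℤ) :
    Kpoly q N ℓ j s
      = Kscale q ℓ j * ∑ k ∈ Finset.range (j + 1), Kcoeff q N j k * Kweight q ℓ s k := by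
  rw [Kpoly, if_pos ⟨j.cast_nonneg, by omega⟩, phi32, Int.toNat_natCast, Kscale, mul_assoc,
    Finset.mul_sum, Finset.mul_sum, Finset.mul_sum]
  refine Finset.sum_congr rfl fun k _ => ?_
  simp only [Kcoeff, Kweight, qPoch, zero_mul, sub_zero, Finset.prod_const_one]
  ring

theorem Kpoly_of_neg (N ℓ : ℕ) {j : ℤ} (hj : j < 0) (s : ℤ) : Kpoly q N ℓ j s = 0 :=
  if_neg fun h => hj.not_ge h.1

theorem Kpoly_of_lt {N ℓ : ℕ} {j : ℤ} (hj : N < j) (s : ℤ) : Kpoly q N ℓ j s = 0 :=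
  if_neg fun h => hj.not_ge (h.2.trans (min_le_left _ _))

theorem Kpoly_zero (hq : 1 < q) (N ℓ : ℕ) (s : ℤ) : Kpoly q N ℓ 0 s = 1 := by
  simpa [Kscale, Kcoeff, qPoch_zero, Kweight, gbinom_zero_right hq]
    using Kpoly_eq_sum (q := q) (Nat.zero_le N) (Nat.zero_le ℓ) s

theorem Kscale_succ (hq : q ≠ 0) (ℓ j : ℕ) :
    Kscale q ℓ (j + 1) = (q ^ (ℓ : ℤ) - q ^ (j : ℤ)) * Kscale q ℓ j := by
  rw [Kscale, Kscale, qPoch_succ, Nat.cast_succ, mul_add_one, zpow_add₀ hq, zpow_neg,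
    zpow_natCast q j]
  field_simp

theorem Kweight_of_lt (hq : q ≠ 0) (ℓ : ℕ) {s k : ℕ} (h : s < k) :
    Kweight q ℓ s k = 0 := by
  rw [Kweight, qPoch_zpow_neg_eq_zero hq h, zero_div, zero_mul]

theorem Kcoeff_of_lt (hq : q ≠ 0) (N : ℕ) {j k : ℕ} (h : j < k) : Kcoeff q N j k = 0 := by
  rw [Kcoeff, qPoch_zpow_neg_eq_zero hq h, mul_zero, zero_div]

theorem Kcoeff_self (hq : 1 < q) {N k : ℕ} (hk : k ≤ N) : Kcoeff q N N k = 1 := by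
  rw [Kcoeff, gbinom_self hq, one_mul, div_self (qPoch_zpow_neg_ne_zero hq hk)]

theorem Kcoeff_add_add (hq : 1 < q) (k i m : ℕ) :
    Kcoeff q (k + i + m) (k + i) k = q ^ (k * m) * gbinom q (i + m) i := by
  have hq0 : q ≠ 0 := by positivity
  induction k with
  | zero => simp [Kcoeff, qPoch_zero]
  | succ k ih =>
    have hb : q ^ (k + i + m + 1) - 1 ≠ 0 := sub_ne_zero.2 (one_lt_pow₀ hq (by omega)).ne'
    rw [Kcoeff] at ih ⊢
    rw [show k + 1 + i + m = k + i + m + 1 by omega, show k + 1 + i = k + i + 1 by omega,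
      qPoch_zpow_neg_succ hq0, qPoch_zpow_neg_succ hq0, ← mul_assoc,
      gbinom_succ_succ_mul_one_sub_inv hq]
    calc q ^ m * (1 - (q ^ (k + i + m + 1))⁻¹) * gbinom q (k + i + m) (k + i)
          * qPoch q (q ^ (-((k + i : ℕ) : ℤ))) k
          / ((1 - (q ^ (k + i + m + 1))⁻¹) * qPoch q (q ^ (-((k + i + m : ℕ) : ℤ))) k)
        = q ^ m * (gbinom q (k + i + m) (k + i) * qPoch q (q ^ (-((k + i : ℕ) : ℤ))) k
          / qPoch q (q ^ (-((k + i + m : ℕ) : ℤ))) k) := by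
          field_simp
      _ = q ^ ((k + 1) * m) * gbinom q (i + m) i := by rw [ih]; ring

theorem Kcoeff_eq_pow_mul_gbinom (hq : 1 < q) {N j k : ℕ} (hk : k ≤ j) (hj : j ≤ N) :
    Kcoeff q N j k = q ^ (k * (N - j)) * gbinom q (N - k) (j - k) := by
  obtain ⟨i, rfl⟩ := Nat.exists_eq_add_of_le hk
  obtain ⟨m, rfl⟩ := Nat.exists_eq_add_of_le hj
  rw [Kcoeff_add_add hq, show k + i + m - (k + i) = m by omega,
    show k + i + m - k = i + m by omega, show k + i - k = i by omega]

theorem Kcoeff_succ_succ (hq : 1 < q) {n i k : ℕ} (hk : k ≤ i + 1) (hi : i < n) :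
    Kcoeff q (n + 1) (i + 1) k = Kcoeff q n i k + q ^ (i + 1) * Kcoeff q n (i + 1) k := by
  obtain ⟨d, rfl⟩ := Nat.exists_eq_add_of_lt hi
  rcases hk.lt_or_eq with hk | rfl
  · obtain ⟨t, rfl⟩ := Nat.exists_eq_add_of_le (Nat.lt_succ_iff.1 hk)
    rw [Kcoeff_eq_pow_mul_gbinom hq (by omega) (by omega),
      Kcoeff_eq_pow_mul_gbinom hq (by omega) (by omega),
      Kcoeff_eq_pow_mul_gbinom hq (by omega) (by omega),
      show k + t + d + 1 + 1 - (k + t + 1) = d + 1 by omega,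
      show k + t + d + 1 - (k + t) = d + 1 by omega,
      show k + t + d + 1 - (k + t + 1) = d by omega,
      show k + t + d + 1 + 1 - k = t + d + 1 + 1 by omega,
      show k + t + d + 1 - k = t + d + 1 by omega,
      show k + t + 1 - k = t + 1 by omega, Nat.add_sub_cancel_left,
      gbinom_succ_succ hq (by omega)]
    ring
  · rw [Kcoeff_eq_pow_mul_gbinom hq le_rfl (by omega),
      Kcoeff_eq_pow_mul_gbinom hq le_rfl (by omega),
      Kcoeff_of_lt (by positivity) _ (Nat.lt_succ_self i), Nat.sub_self, gbinom_zero_right hq,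
      gbinom_zero_right hq, show i + d + 1 + 1 - (i + 1) = d + 1 by omega,
      show i + d + 1 - (i + 1) = d by omega]
    ring

theorem Kpoly_succ_succ (hq : 1 < q) {n ℓ i : ℕ} (hin : i + 1 ≤ n) (hiℓ : i + 1 ≤ ℓ)
    (s : ℤ) :
    Kpoly q (n + 1) ℓ (i + 1 : ℕ) s
      = (q ^ (ℓ : ℤ) - q ^ (i : ℤ)) * Kpoly q n ℓ i s
        + q ^ ((i + 1 : ℕ) : ℤ) * Kpoly q n ℓ (i + 1 : ℕ) s := by
  have hq0 : q ≠ 0 := by positivity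
  have hlower : ∑ k ∈ Finset.range (i + 1), Kcoeff q n i k * Kweight q ℓ s k
      = ∑ k ∈ Finset.range (i + 2), Kcoeff q n i k * Kweight q ℓ s k := by
    rw [Finset.sum_range_succ _ (i + 1), Kcoeff_of_lt hq0 n (Nat.lt_succ_self i), zero_mul,
      add_zero]
  have hsum : ∑ k ∈ Finset.range (i + 2), Kcoeff q (n + 1) (i + 1) k * Kweight q ℓ s k
      = ∑ k ∈ Finset.range (i + 2), Kcoeff q n i k * Kweight q ℓ s k
        + q ^ (i + 1)
          * ∑ k ∈ Finset.range (i + 2), Kcoeff q n (i + 1) k * Kweight q ℓ s k := by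
    rw [Finset.mul_sum, ← Finset.sum_add_distrib]
    refine Finset.sum_congr rfl fun k hk => ?_
    rw [Kcoeff_succ_succ hq (Nat.lt_succ_iff.1 (Finset.mem_range.1 hk)) hin]
    ring
  rw [Kpoly_eq_sum (by omega) hiℓ, Kpoly_eq_sum (by omega) (by omega), Kpoly_eq_sum hin hiℓ,
    Kscale_succ hq0, hlower, hsum]
  simp only [zpow_natCast]
  ring

theorem Kpoly_succ_self (hq : 1 < q) {n ℓ s : ℕ} (hnℓ : n + 1 ≤ ℓ) (hs : s ≤ n) :
    Kpoly q (n + 1) ℓ (n + 1 : ℕ) s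
      = (q ^ (ℓ : ℤ) - q ^ (n : ℤ)) * Kpoly q n ℓ n s := by
  have hq0 : q ≠ 0 := by positivity
  rw [Kpoly_eq_sum le_rfl hnℓ, Kpoly_eq_sum le_rfl (by omega), Kscale_succ hq0,
    Finset.sum_range_succ, Kweight_of_lt hq0 ℓ (Nat.lt_succ_of_le hs), mul_zero, add_zero,
    mul_assoc]
  congr 2
  refine Finset.sum_congr rfl fun k hk => ?_
  have hk : k ≤ n := Nat.lt_succ_iff.1 (Finset.mem_range.1 hk)
  rw [Kcoeff_self hq hk, Kcoeff_self hq (hk.trans n.le_succ)]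

theorem stmt7_general (q : ℝ) (hq : 1 < q) (N ℓ : ℕ) (j s : ℕ)
    (hj : j ≤ min N ℓ) (hs : s ≤ min (N - 1) ℓ) :
    Kpoly q N ℓ j s
      = (q ^ (ℓ : ℤ) - q ^ ((j : ℤ) - 1)) * Kpoly q (N - 1) ℓ ((j : ℤ) - 1) s
        + q ^ (j : ℤ) * Kpoly q (N - 1) ℓ j s := by
  rcases j with _ | i
  · simp [Kpoly_zero hq, Kpoly_of_neg]
  obtain ⟨n, rfl⟩ : ∃ n, N = n + 1 := ⟨N - 1, by omega⟩
  rw [Nat.add_sub_cancel, show ((i + 1 : ℕ) : ℤ) - 1 = i by omega]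
  rcases (show i + 1 ≤ n ∨ i = n by omega) with hin | rfl
  · exact Kpoly_succ_succ hq hin (by omega) s
  · rw [Kpoly_of_lt (show (i : ℤ) < (i + 1 : ℕ) by omega), mul_zero, add_zero]
    exact Kpoly_succ_self hq (by omega) (by omega)

/-- Backward contiguity relation for the normalized affine q-Krawtchouk polynomials:
`K_j(N,ℓ;q;s) = (q^ℓ - q^{j-1}) K_{j-1}(N-1,ℓ;q;s) + q^j K_j(N-1,ℓ;q;s)`. -/
theorem stmt7 (q : ℝ) (hq : 1 < q) (N ℓ : ℕ) (hN : 1 ≤ N) (j s : ℕ)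
    (hj : j ≤ min N ℓ) (hs : s ≤ min (N - 1) ℓ) :
    Kpoly q N ℓ j s
      = (q ^ (ℓ : ℤ) - q ^ ((j : ℤ) - 1)) * Kpoly q (N - 1) ℓ ((j : ℤ) - 1) s
        + q ^ (j : ℤ) * Kpoly q (N - 1) ℓ j s :=
  stmt7_general q hq N ℓ j s hj hs
end
end

section
/- For 0 ≤ s ≤ ℓ, 0 ≤ r ≤ min(m-s, n-m), the eigenvalue T_{01}(r,s) of the attenuated-space scheme equals -q^{ℓ+m}/(1-q) · ( (1-q^{-ℓ})(1-q^{-m}) + q^{-s} - 1 ). In particular T_{01}(r,s) is independent of r. -/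
noncomputable section

/-- The bivariate eigenvalue function `T_{ij}(r,s) = q^{iℓ} K_j(m-i,ℓ;q;s) E_i(n-s,m-s;q;r)`. -/
def Tpoly (q : ℝ) (n ℓ m : ℕ) (i : ℕ) (j : ℤ) (r s : ℕ) : ℝ :=
  q ^ ((i : ℤ) * (ℓ : ℤ)) * Kpoly q (m - i) ℓ j s * Epoly q (n - s) (m - s) i r

lemma qPoch_q_ne_zero {q : ℝ} (hq : 1 < q) (k : ℕ) : qPoch q q k ≠ 0 := by
  unfold qPoch
  apply Finset.prod_ne_zero_iff.2
  intro i _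
  have h1 : (1:ℝ) ≤ q ^ i := one_le_pow₀ hq.le
  nlinarith

lemma gbinom_zero {q : ℝ} (hq : 1 < q) (N : ℕ) : gbinom q N 0 = 1 := by
  unfold gbinom
  rw [show qPoch q q 0 = 1 from rfl]
  rw [Nat.sub_zero, one_mul, div_self (qPoch_q_ne_zero hq N)]

/-- The eigenvalue `T_{01}(r,s)` equals
`-q^{ℓ+m}/(1-q) · ((1-q^{-ℓ})(1-q^{-m}) + q^{-s} - 1)`; in particular it is
independent of `r`. -/
theorem stmt13 (q : ℝ) (hq : 1 < q) (n ℓ m : ℕ) (hmn : m ≤ n)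
    (hm : 1 ≤ m) (hℓ : 1 ≤ ℓ)
    (r s : ℕ) (hs : s ≤ ℓ) (hr : r ≤ min (m - s) (n - m)) :
    Tpoly q n ℓ m 0 1 r s
      = -q ^ ((ℓ : ℤ) + (m : ℤ)) / (1 - q)
          * ((1 - q ^ (-(ℓ : ℤ))) * (1 - q ^ (-(m : ℤ))) + q ^ (-(s : ℤ)) - 1) := by
  obtain ⟨m', rfl⟩ : ∃ m', m = m' + 1 := ⟨m - 1, by omega⟩
  have hq0 : (0:ℝ) < q := lt_trans one_pos hq
  have hq0' : q ≠ 0 := ne_of_gt hq0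
  have h1q : 1 - q ≠ 0 := by nlinarith
  have key : ∀ k : ℕ, 1 ≤ k → 1 - q ^ (-(k:ℤ)) ≠ 0 := by
    intro k hk
    have h1 : (1:ℝ) < q ^ (k:ℤ) := one_lt_zpow₀ hq (show (0:ℤ) < (k:ℤ) by exact_mod_cast hk)
    have : q ^ (-(k:ℤ)) < 1 := by
      rw [zpow_neg]
      exact inv_lt_one_of_one_lt₀ h1
    linarith
  have hℓne : 1 - q ^ (-(ℓ:ℤ)) ≠ 0 := key ℓ hℓ
  have hmne : 1 - q ^ (-((m'+1:ℕ):ℤ)) ≠ 0 := key (m'+1) (by omega)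
  have hcondK : (0:ℤ) ≤ 1 ∧ (1:ℤ) ≤ min ((m'+1:ℕ):ℤ) (ℓ:ℤ) := by
    constructor
    · norm_num
    · simp only [le_min_iff]; omega
  have hcondE : (0:ℤ) ≤ 0 ∧ (0:ℤ) ≤ min (((n-s:ℕ):ℤ) - ((m'+1-s:ℕ):ℤ)) ((m'+1-s:ℕ):ℤ) := by
    refine ⟨le_refl 0, ?_⟩
    simp only [le_min_iff]
    omega
  simp only [Tpoly, Nat.sub_zero, Nat.cast_zero, Nat.cast_ofNat, zero_mul, zpow_zero, one_mul,
    Nat.cast_zero]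
  rw [Kpoly, Epoly, if_pos hcondK, if_pos hcondE]
  simp only [Int.toNat_one, Int.toNat_zero, gbinom_zero hq, phi32, qPoch, gbinom,
    Finset.sum_range_succ, Finset.sum_range_zero, Finset.prod_range_succ, Finset.prod_range_zero,
    pow_zero, pow_one, one_mul, mul_one, zero_add, Nat.sub_zero]
  rw [div_self (show (∏ i ∈ Finset.range (m' + 1 - s), (1 - q * q ^ i)) ≠ 0 from qPoch_q_ne_zero hq _),
    div_self (show (∏ i ∈ Finset.range (n - s - (m' + 1 - s)), (1 - q * q ^ i)) ≠ 0 from qPoch_q_ne_zero hq _)]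
  simp only [Nat.add_sub_cancel, mul_one, one_mul, mul_zero, zero_mul, sub_zero]
  have hA : q ^ (ℓ:ℤ) ≠ 0 := zpow_ne_zero _ hq0'
  have hB : q ^ (((m'+1:ℕ)):ℤ) ≠ 0 := zpow_ne_zero _ hq0'
  have hC : q ^ ((s:ℕ):ℤ) ≠ 0 := zpow_ne_zero _ hq0'
  have hP : (∏ i ∈ Finset.range m', (1 - q * q ^ i)) ≠ 0 := qPoch_q_ne_zero hq m'
  have hℓ1 : q ^ (ℓ:ℤ) - 1 ≠ 0 := by
    have := one_lt_zpow₀ hq (show (0:ℤ) < (ℓ:ℤ) by exact_mod_cast Nat.pos_of_ne_zero (by omega))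
    linarith
  have hm1 : q ^ (((m'+1:ℕ)):ℤ) - 1 ≠ 0 := by
    have := one_lt_zpow₀ hq (show (0:ℤ) < ((m'+1:ℕ):ℤ) by exact_mod_cast Nat.pos_of_ne_zero (by omega))
    linarith
  simp only [zpow_neg, zpow_one] at hℓne hmne ⊢
  rw [zpow_add₀ hq0']
  simp only [zpow_natCast] at hA hB hC hℓne hmne hℓ1 hm1 ⊢
  field_simp
  ring
end
end

section
/- Let V be a finite-dimensional complex vector space with basis {T_{ij}}_{(i,j)∈D} indexed by D = {(a,b)∈ℕ²: a+b ≤ m, a ≤ n-m, b ≤ ℓ}. Define linear operators X*, Y* by X* T_{ij} = q^{-i}(q^{-j}-1) T_{ij} and Y* T_{ij} = (q^{-i}-1) T_{ij}, and set X̂* = (q^{ℓ+1}/(q-1)²)(I + Y* + X*), Ŷ* = I + Y*. Further define X acting tridiagonally by X T_{ij} = b⁺(i,j) T_{i,j+1} + b⁰(i,j) T_{ij} + b⁻(i,j) T_{i,j-1} with b⁺(i,j) = q^{i+j-ℓ-m}(q^{j+1}-1), b⁻(i,j) = (q^{j-ℓ-1}-1)(q^{i+j-m-1}-1), b⁰(i,j)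 = -b⁺(i,j-1) - b⁻(i,j+1), and X̂ = I + X. Then the pair (X̂, X̂*) satisfies the Askey–Wilson relation {X̂², X̂*} - (q+q^{-1}) X̂ X̂* X̂ = q^{-m-1}(q+1) I - q^{-m-1}(q^{ℓ+1}+1) X̂ - Ŷ* X̂, where Ŷ* is central with X̂ and X̂*. -/
noncomputable section

/-- Recurrence coefficient `b⁺(i,j) = q^{i+j-ℓ-m}(q^{j+1}-1)`. -/
def bp (q : ℝ) (ℓ m : ℕ) (i j : ℤ) : ℝ :=
  q ^ (i + j - (ℓ : ℤ) - (m : ℤ)) * (q ^ (j + 1) - 1)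

/-- Recurrence coefficient `b⁻(i,j) = (q^{j-ℓ-1}-1)(q^{i+j-m-1}-1)`. -/
def bm (q : ℝ) (ℓ m : ℕ) (i j : ℤ) : ℝ :=
  (q ^ (j - (ℓ : ℤ) - 1) - 1) * (q ^ (i + j - (m : ℤ) - 1) - 1)

/-- Recurrence coefficient `b⁰(i,j) = -b⁺(i,j-1) - b⁻(i,j+1)`. -/
def b0 (q : ℝ) (ℓ m : ℕ) (i j : ℤ) : ℝ := -bp q ℓ m i (j - 1) - bm q ℓ m i (j + 1)

/-- Membership of `(i,j)` in the domain `D = {(a,b) ∈ ℕ² : a+b ≤ m, a ≤ n-m, b ≤ ℓ}`. -/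
def memD (n ℓ m : ℕ) (i j : ℤ) : Prop :=
  0 ≤ i ∧ 0 ≤ j ∧ i + j ≤ (m : ℤ) ∧ i ≤ (n : ℤ) - (m : ℤ) ∧ j ≤ (ℓ : ℤ)

set_option maxHeartbeats 4000000

/-- The pair `(X̂, X̂*)` built from the bispectral operators of the eigenvalue
polynomials satisfies the Askey–Wilson relation
`{X̂²,X̂*} - (q+q⁻¹) X̂X̂*X̂ = q^{-m-1}(q+1) I - q^{-m-1}(q^{ℓ+1}+1) X̂ - Ŷ*X̂`,
with `Ŷ*` central with respect to `X̂` and `X̂*`. -/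
theorem stmt17 (q : ℝ) (hq : 1 < q) (n ℓ m : ℕ)
    (V : Type) [AddCommGroup V] [Module ℝ V]
    (T : ℤ × ℤ → V)
    (hT0 : ∀ i j : ℤ, ¬ memD n ℓ m i j → T (i, j) = 0)
    (hTspan : Submodule.span ℝ (Set.range T) = ⊤)
    (Xs Ys X : Module.End ℝ V)
    (hXs : ∀ i j : ℤ, Xs (T (i, j)) = (q ^ (-i) * (q ^ (-j) - 1)) • T (i, j))
    (hYs : ∀ i j : ℤ, Ys (T (i, j)) = (q ^ (-i) - 1) • T (i, j))
    (hX : ∀ i j : ℤ, memD n ℓ m i j →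
      X (T (i, j)) = bp q ℓ m i j • T (i, j + 1) + b0 q ℓ m i j • T (i, j)
        + bm q ℓ m i j • T (i, j - 1)) :
    ∀ Xhat Xshat Yshat : Module.End ℝ V,
      Xhat = 1 + X →
      Xshat = (q ^ (ℓ + 1) / (q - 1) ^ 2) • (1 + Ys + Xs) →
      Yshat = 1 + Ys →
      (Xhat ^ 2 * Xshat + Xshat * Xhat ^ 2 - (q + q⁻¹) • (Xhat * Xshat * Xhat)
          = (q ^ (-(m : ℤ) - 1) * (q + 1)) • (1 : Module.End ℝ V)
            - (q ^ (-(m : ℤ) - 1) * (q ^ (ℓ + 1) + 1)) • Xhat - Yshat * Xhat)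
        ∧ Yshat * Xhat = Xhat * Yshat ∧ Yshat * Xshat = Xshat * Yshat := by
  intro Xhat Xshat Yshat hXhat hXshat hYshat
  have hq0 : q ≠ 0 := by positivity
  have hq1 : q - 1 ≠ 0 := by intro h; nlinarith
  -- extended tridiagonal action of X, valid for all indices
  have hX' : ∀ i j : ℤ, X (T (i, j)) = bp q ℓ m i j • T (i, j + 1) + b0 q ℓ m i j • T (i, j)
      + bm q ℓ m i j • T (i, j - 1) := by
    intro i j
    by_cases h : memD n ℓ m i j
    · exact hX i j h
    · have hT : T (i, j) = 0 := hT0 i j h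
      have h1 : bp q ℓ m i j • T (i, j + 1) = 0 := by
        by_cases hj : j = -1
        · subst hj; norm_num [bp]
        · have hnm : ¬ memD n ℓ m i (j + 1) := by
            unfold memD at h ⊢; omega
          rw [hT0 _ _ hnm, smul_zero]
      have h2 : bm q ℓ m i j • T (i, j - 1) = 0 := by
        by_cases hj : j = (ℓ : ℤ) + 1
        · have : bm q ℓ m i j = 0 := by
            simp [bm, hj, show (ℓ : ℤ) + 1 - (ℓ : ℤ) - 1 = 0 by ring]
          rw [this, zero_smul]
        · by_cases hij : i + j = (m : ℤ) + 1
          · have : bm q ℓ m i j = 0 := by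
              simp [bm, hij, show (m : ℤ) + 1 - (m : ℤ) - 1 = 0 by ring]
            rw [this, zero_smul]
          · have hnm : ¬ memD n ℓ m i (j - 1) := by
              unfold memD at h ⊢; omega
            rw [hT0 _ _ hnm, smul_zero]
      rw [hT, h1, h2, map_zero, smul_zero]; simp
  -- action of the hatted operators
  have hA : ∀ i j : ℤ, Xhat (T (i, j)) = bp q ℓ m i j • T (i, j + 1)
      + (1 + b0 q ℓ m i j) • T (i, j) + bm q ℓ m i j • T (i, j - 1) := by
    intro i j
    rw [hXhat]
    simp only [LinearMap.add_apply, Module.End.one_apply, hX', add_smul, one_smul]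
    abel
  have hS : ∀ i j : ℤ, Xshat (T (i, j))
      = (q ^ (ℓ + 1) / (q - 1) ^ 2 * (q ^ (-i) * q ^ (-j))) • T (i, j) := by
    intro i j
    rw [hXshat]
    simp only [LinearMap.smul_apply, LinearMap.add_apply, Module.End.one_apply, hXs, hYs]
    match_scalars
    ring
  have hYh : ∀ i j : ℤ, Yshat (T (i, j)) = (q ^ (-i)) • T (i, j) := by
    intro i j
    rw [hYshat]
    simp only [LinearMap.add_apply, Module.End.one_apply, hYs]
    match_scalars
    ring
  have hqi : ∀ k : ℤ, (q : ℝ) ^ k ≠ 0 := fun k => zpow_ne_zero k hq0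
  have hql : (q : ℝ) ^ ℓ ≠ 0 := pow_ne_zero _ hq0
  have hqm : (q : ℝ) ^ m ≠ 0 := pow_ne_zero _ hq0
  refine ⟨?_, ?_, ?_⟩
  · apply LinearMap.ext_on hTspan
    rintro _ ⟨⟨i, j⟩, rfl⟩
    simp only [LinearMap.add_apply, LinearMap.sub_apply, LinearMap.smul_apply,
      Module.End.mul_apply, Module.End.one_apply, pow_two, hA, hS, hYh, map_add, map_smul,
      smul_add, smul_smul,
      show j + 1 + 1 = j + 2 by ring, show j + 1 - 1 = j by ring,
      show j - 1 + 1 = j by ring, show j - 1 - 1 = j - 2 by ring]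
    match_scalars <;>
    · simp only [bp, bm, b0, zpow_add₀ hq0, zpow_sub₀ hq0, zpow_neg, zpow_one, zpow_natCast,
        pow_succ, zpow_two]
      field_simp
      ring
  · apply LinearMap.ext_on hTspan
    rintro _ ⟨⟨i, j⟩, rfl⟩
    simp only [Module.End.mul_apply, hA, hYh, map_add, map_smul, smul_add, smul_smul]
    match_scalars <;> ring
  · apply LinearMap.ext_on hTspan
    rintro _ ⟨⟨i, j⟩, rfl⟩
    simp only [Module.End.mul_apply, hS, hYh, map_smul, smul_smul]
    match_scalars <;> ring
end
end
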